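/- Fix an even integer n = 2a with a ≥ 1. The Pareto set of the four-objective maximization problem AOAZ(x) = (f11(x), f12(x), f21(x), f22(x)) over x ∈ {0,1}^n is exactly the union {x : x_i = 1 for all 1 ≤ i ≤ n/2} ∪ {x : x_i = 1 for all n/2 + 1 ≤ i ≤ n}, and this set has cardinality 2^{n/2 + 1} − 1. -/
import Mathlib


/-- Number of ones in the second half of `x` (indices `a ≤ i < 2a`). -/
def f11 (a : ℕ) (x : Fin (2 * a) → Bool) : ℕ :=
  ∑ i : Fin (2 * a), if a ≤ (i : ℕ) ∧ x i = true then 1 else 0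

/-- Ones in the first half plus zeros in the second half. -/
def f12 (a : ℕ) (x : Fin (2 * a) → Bool) : ℕ :=
  ∑ i : Fin (2 * a),
    if ((i : ℕ) < a ∧ x i = true) ∨ (a ≤ (i : ℕ) ∧ x i = false) then 1 else 0

/-- Zeros in the first half plus ones in the second half. -/
def f21 (a : ℕ) (x : Fin (2 * a) → Bool) : ℕ :=
  ∑ i : Fin (2 * a),
    if ((i : ℕ) < a ∧ x i = false) ∨ (a ≤ (i : ℕ) ∧ x i = true) then 1 else 0

/-- Number of ones in the first half of `x` (indices `i < a`). -/
def f22 (a : ℕ) (x : Fin (2 * a) → Bool) : ℕ :=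
  ∑ i : Fin (2 * a), if (i : ℕ) < a ∧ x i = true then 1 else 0

def AOAZ (a : ℕ) (x : Fin (2 * a) → Bool) : ℕ × ℕ × ℕ × ℕ :=
  (f11 a x, f12 a x, f21 a x, f22 a x)

/-- `u` dominates `v` for four-objective maximization. -/
def dominates4 (u v : ℕ × ℕ × ℕ × ℕ) : Prop :=
  (v.1 ≤ u.1 ∧ v.2.1 ≤ u.2.1 ∧ v.2.2.1 ≤ u.2.2.1 ∧ v.2.2.2 ≤ u.2.2.2) ∧ u ≠ v

/-- Pareto set (maximization) of `AOAZ` on bit strings of length `2a`. -/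
def paretoSetAOAZ (a : ℕ) : Set (Fin (2 * a) → Bool) :=
  {x | ¬ ∃ y : Fin (2 * a) → Bool, dominates4 (AOAZ a y) (AOAZ a x)}

lemma count_ge (a : ℕ) :
    ∑ k : Fin (2*a), (if a ≤ (k:ℕ) then (1:ℕ) else 0) = a := by
  rw [Fin.sum_univ_eq_sum_range (fun k => if a ≤ k then (1:ℕ) else 0) (2*a)]
  rw [← Finset.sum_filter]
  have h : Finset.filter (fun k => a ≤ k) (Finset.range (2*a)) = Finset.Ico a (2*a) := by
    ext k; simp only [Finset.mem_filter, Finset.mem_range, Finset.mem_Ico]; omega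
  rw [h, ← Finset.card_eq_sum_ones, Nat.card_Ico]; omega

lemma count_lt (a : ℕ) :
    ∑ k : Fin (2*a), (if (k:ℕ) < a then (1:ℕ) else 0) = a := by
  rw [Fin.sum_univ_eq_sum_range (fun k => if k < a then (1:ℕ) else 0) (2*a)]
  rw [← Finset.sum_filter]
  have h : Finset.filter (fun k => k < a) (Finset.range (2*a)) = Finset.range a := by
    ext k; simp only [Finset.mem_filter, Finset.mem_range]; omega
  rw [h, ← Finset.card_eq_sum_ones, Finset.card_range]

lemma key1 (a : ℕ) (x : Fin (2*a) → Bool) : f12 a x + f11 a x = f22 a x + a := by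
  have h : f12 a x + f11 a x
      = f22 a x + ∑ k : Fin (2*a), (if a ≤ (k:ℕ) then (1:ℕ) else 0) := by
    unfold f12 f11 f22
    rw [← Finset.sum_add_distrib, ← Finset.sum_add_distrib]
    apply Finset.sum_congr rfl
    intro k _
    rcases Nat.lt_or_ge (k:ℕ) a with hk | hk
    · cases hxk : x k <;> simp [hk, Nat.not_le.mpr hk, hxk]
    · cases hxk : x k <;> simp [Nat.not_lt.mpr hk, hk, hxk]
  rw [count_ge] at h; exact h

lemma key2 (a : ℕ) (x : Fin (2*a) → Bool) : f21 a x + f22 a x = f11 a x + a := by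
  have h : f21 a x + f22 a x
      = f11 a x + ∑ k : Fin (2*a), (if (k:ℕ) < a then (1:ℕ) else 0) := by
    unfold f21 f22 f11
    rw [← Finset.sum_add_distrib, ← Finset.sum_add_distrib]
    apply Finset.sum_congr rfl
    intro k _
    rcases Nat.lt_or_ge (k:ℕ) a with hk | hk
    · cases hxk : x k <;> simp [hk, Nat.not_le.mpr hk, hxk]
    · cases hxk : x k <;> simp [Nat.not_lt.mpr hk, hk, hxk]
  rw [count_lt] at h; exact h

lemma f11_le (a : ℕ) (x : Fin (2*a) → Bool) : f11 a x ≤ a := by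
  calc f11 a x ≤ ∑ k : Fin (2*a), (if a ≤ (k:ℕ) then (1:ℕ) else 0) := by
        apply Finset.sum_le_sum
        intro k _
        split_ifs <;> simp_all
    _ = a := count_ge a

lemma f22_le (a : ℕ) (x : Fin (2*a) → Bool) : f22 a x ≤ a := by
  calc f22 a x ≤ ∑ k : Fin (2*a), (if (k:ℕ) < a then (1:ℕ) else 0) := by
        apply Finset.sum_le_sum
        intro k _
        split_ifs <;> simp_all
    _ = a := count_lt a

lemma f22_all (a : ℕ) (x : Fin (2*a) → Bool)
    (h : ∀ i : Fin (2*a), (i:ℕ) < a → x i = true) : f22 a x = a := by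
  calc f22 a x = ∑ k : Fin (2*a), (if (k:ℕ) < a then (1:ℕ) else 0) := by
        apply Finset.sum_congr rfl
        intro k _
        rcases Nat.lt_or_ge (k:ℕ) a with hk | hk
        · simp [hk, h k hk]
        · simp [Nat.not_lt.mpr hk]
    _ = a := count_lt a

lemma f11_all (a : ℕ) (x : Fin (2*a) → Bool)
    (h : ∀ i : Fin (2*a), a ≤ (i:ℕ) → x i = true) : f11 a x = a := by
  calc f11 a x = ∑ k : Fin (2*a), (if a ≤ (k:ℕ) then (1:ℕ) else 0) := by
        apply Finset.sum_congr rfl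
        intro k _
        rcases Nat.lt_or_ge (k:ℕ) a with hk | hk
        · simp [Nat.not_le.mpr hk]
        · simp [hk, h k hk]
    _ = a := count_ge a

lemma sum_update_g {N : ℕ} (x : Fin N → Bool) (i : Fin N) (b : Bool) (g : Fin N → Bool → ℕ) :
    (∑ k : Fin N, g k (Function.update x i b k)) + g i (x i)
      = (∑ k : Fin N, g k (x k)) + g i b := by
  rw [← Finset.add_sum_erase _ (fun k => g k (Function.update x i b k)) (Finset.mem_univ i),
      ← Finset.add_sum_erase _ (fun k => g k (x k)) (Finset.mem_univ i)]
  rw [Function.update_self]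
  rw [Finset.sum_congr rfl
    (fun k hk => by rw [Function.update_of_ne (Finset.ne_of_mem_erase hk)])]
  ring

lemma f11_update (a : ℕ) (x : Fin (2*a) → Bool) (i : Fin (2*a)) (b : Bool) :
    f11 a (Function.update x i b) + (if a ≤ (i:ℕ) ∧ x i = true then 1 else 0)
      = f11 a x + (if a ≤ (i:ℕ) ∧ b = true then 1 else 0) :=
  sum_update_g x i b (fun k c => if a ≤ (k:ℕ) ∧ c = true then 1 else 0)

lemma f22_update (a : ℕ) (x : Fin (2*a) → Bool) (i : Fin (2*a)) (b : Bool) :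
    f22 a (Function.update x i b) + (if (i:ℕ) < a ∧ x i = true then 1 else 0)
      = f22 a x + (if (i:ℕ) < a ∧ b = true then 1 else 0) :=
  sum_update_g x i b (fun k c => if (k:ℕ) < a ∧ c = true then 1 else 0)


lemma pareto_eq (a : ℕ) :
    paretoSetAOAZ a =
      {x | ∀ i : Fin (2 * a), (i : ℕ) < a → x i = true} ∪
      {x | ∀ i : Fin (2 * a), a ≤ (i : ℕ) → x i = true} := by
  ext x
  simp only [paretoSetAOAZ, Set.mem_setOf_eq, Set.mem_union]
  constructor
  · intro h
    by_contra hc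
    push_neg at hc
    obtain ⟨⟨i, hi, hxi⟩, ⟨j, hj, hxj⟩⟩ := hc
    replace hxi : x i = false := Bool.eq_false_iff.mpr hxi
    replace hxj : x j = false := Bool.eq_false_iff.mpr hxj
    have hij : j ≠ i := by
      intro hji; rw [hji] at hj; omega
    have hy1j : Function.update x i true j = false := by
      rw [Function.update_of_ne hij, hxj]
    have h22a : f22 a (Function.update x i true) = f22 a x + 1 := by
      have hu := f22_update a x i true
      rw [hxi] at hu
      simpa [hi] using hu
    have h11a : f11 a (Function.update x i true) = f11 a x := by
      have hu := f11_update a x i true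
      rw [hxi] at hu
      simpa [Nat.not_le.mpr hi] using hu
    have h22b : f22 a (Function.update (Function.update x i true) j true)
        = f22 a (Function.update x i true) := by
      have hu := f22_update a (Function.update x i true) j true
      rw [hy1j] at hu
      simpa [Nat.not_lt.mpr hj] using hu
    have h11b : f11 a (Function.update (Function.update x i true) j true)
        = f11 a (Function.update x i true) + 1 := by
      have hu := f11_update a (Function.update x i true) j true
      rw [hy1j] at hu
      simpa [hj] using hu
    have k1x := key1 a x
    have k2x := key2 a x
    have k1y := key1 a (Function.update (Function.update x i true) j true)
    have k2y := key2 a (Function.update (Function.update x i true) j true)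
    apply h
    refine ⟨Function.update (Function.update x i true) j true, ⟨?_, ?_, ?_, ?_⟩, ?_⟩
    · show f11 a x ≤ f11 a (Function.update (Function.update x i true) j true); omega
    · show f12 a x ≤ f12 a (Function.update (Function.update x i true) j true); omega
    · show f21 a x ≤ f21 a (Function.update (Function.update x i true) j true); omega
    · show f22 a x ≤ f22 a (Function.update (Function.update x i true) j true); omega
    · intro he
      have he1 : f11 a (Function.update (Function.update x i true) j true) = f11 a x :=
        congrArg Prod.fst he
      omega
  · rintro hx ⟨y, ⟨h11, h12, h21, h22⟩, hne⟩
    simp only [AOAZ] at h11 h12 h21 h22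
    have k1x := key1 a x
    have k2x := key2 a x
    have k1y := key1 a y
    have k2y := key2 a y
    have b11 := f11_le a y
    have b22 := f22_le a y
    have hfx : f22 a x = a ∨ f11 a x = a := by
      rcases hx with hx | hx
      · exact Or.inl (f22_all a x hx)
      · exact Or.inr (f11_all a x hx)
    apply hne
    simp only [AOAZ, Prod.mk.injEq]
    refine ⟨?_, ?_, ?_, ?_⟩ <;> omega

def equivFirst (a : ℕ) :
    ({x : Fin (2*a) → Bool | ∀ i : Fin (2 * a), (i : ℕ) < a → x i = true})
      ≃ ({i : Fin (2*a) // a ≤ (i:ℕ)} → Bool) where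
  toFun x j := x.1 j.1
  invFun g := ⟨fun i => if h : a ≤ (i:ℕ) then g ⟨i, h⟩ else true, by
    intro i hi; simp [Nat.not_le.mpr hi]⟩
  left_inv x := by
    apply Subtype.ext
    funext i
    by_cases h : a ≤ (i:ℕ)
    · simp [h]
    · have hx := x.2 i (Nat.not_le.mp h)
      simp [h, hx]
  right_inv g := by
    funext j
    simp [j.2]

lemma card_first (a : ℕ) :
    ({x : Fin (2*a) → Bool | ∀ i : Fin (2 * a), (i : ℕ) < a → x i = true}).ncard = 2 ^ a := by
  rw [← Nat.card_coe_set_eq]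
  rw [Nat.card_congr (equivFirst a), Nat.card_eq_fintype_card, Fintype.card_fun, Fintype.card_bool]
  congr 1
  rw [Fintype.card_subtype, Finset.card_filter]
  exact count_ge a

def equivSecond (a : ℕ) :
    ({x : Fin (2*a) → Bool | ∀ i : Fin (2 * a), a ≤ (i : ℕ) → x i = true})
      ≃ ({i : Fin (2*a) // (i:ℕ) < a} → Bool) where
  toFun x j := x.1 j.1
  invFun g := ⟨fun i => if h : (i:ℕ) < a then g ⟨i, h⟩ else true, by
    intro i hi; simp [Nat.not_lt.mpr hi]⟩
  left_inv x := by
    apply Subtype.ext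
    funext i
    by_cases h : (i:ℕ) < a
    · simp [h]
    · have hx := x.2 i (Nat.not_lt.mp h)
      simp [h, hx]
  right_inv g := by
    funext j
    simp [j.2]

lemma card_second (a : ℕ) :
    ({x : Fin (2*a) → Bool | ∀ i : Fin (2 * a), a ≤ (i : ℕ) → x i = true}).ncard = 2 ^ a := by
  rw [← Nat.card_coe_set_eq]
  rw [Nat.card_congr (equivSecond a), Nat.card_eq_fintype_card, Fintype.card_fun, Fintype.card_bool]
  congr 1
  rw [Fintype.card_subtype, Finset.card_filter]
  exact count_lt a

lemma card_inter (a : ℕ) :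
    ({x : Fin (2*a) → Bool | ∀ i : Fin (2 * a), (i : ℕ) < a → x i = true} ∩
     {x : Fin (2*a) → Bool | ∀ i : Fin (2 * a), a ≤ (i : ℕ) → x i = true}).ncard = 1 := by
  have h : ({x : Fin (2*a) → Bool | ∀ i : Fin (2 * a), (i : ℕ) < a → x i = true} ∩
      {x : Fin (2*a) → Bool | ∀ i : Fin (2 * a), a ≤ (i : ℕ) → x i = true})
      = {fun _ => true} := by
    ext x
    simp only [Set.mem_inter_iff, Set.mem_setOf_eq, Set.mem_singleton_iff]
    constructor
    · rintro ⟨h1, h2⟩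
      funext i
      rcases Nat.lt_or_ge (i:ℕ) a with hi | hi
      · exact h1 i hi
      · exact h2 i hi
    · rintro rfl
      exact ⟨fun _ _ => rfl, fun _ _ => rfl⟩
  rw [h, Set.ncard_singleton]

lemma union_card_aux {α : Type*} (a : ℕ) (s t : Set α)
    (h : (s ∪ t).ncard + (s ∩ t).ncard = s.ncard + t.ncard)
    (c1 : s.ncard = 2 ^ a) (c2 : t.ncard = 2 ^ a) (c3 : (s ∩ t).ncard = 1) :
    (s ∪ t).ncard = 2 ^ (a + 1) - 1 := by
  rw [c1, c2, c3] at h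
  have hp : 2 ^ (a + 1) = 2 ^ a * 2 := pow_succ 2 a
  omega


theorem aoaz_pareto_set (a : ℕ) (ha : 1 ≤ a) :
    paretoSetAOAZ a =
      {x | ∀ i : Fin (2 * a), (i : ℕ) < a → x i = true} ∪
      {x | ∀ i : Fin (2 * a), a ≤ (i : ℕ) → x i = true} ∧
    (paretoSetAOAZ a).ncard = 2 ^ (a + 1) - 1 := by
  refine ⟨pareto_eq a, ?_⟩
  rw [pareto_eq a]
  have h := Set.ncard_union_add_ncard_inter
    ({x : Fin (2*a) → Bool | ∀ i : Fin (2 * a), (i : ℕ) < a → x i = true})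
    ({x : Fin (2*a) → Bool | ∀ i : Fin (2 * a), a ≤ (i : ℕ) → x i = true})
    (Set.toFinite _) (Set.toFinite _)
  exact union_card_aux a _ _ h (card_first a) (card_second a) (card_inter a)
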